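/- Let ω, μ, t ∈ ℝ with μ ≠ 0. Then (sin(ω(t + 2μ)) - 2·sin(ω(t + μ)) + sin(ωt))/μ² + ω²·(sinc(ωμ/2))²·sin(ω(t + μ)) = 0, and likewise (cos(ω(t + 2μ)) - 2·cos(ω(t + μ)) + cos(ωt))/μ² + ω²·(sinc(ωμ/2))²·cos(ω(t + μ)) = 0. -/

import Mathlib

noncomputable def sinc (x : ℝ) : ℝ := if x = 0 then 1 else Real.sin x / x

/-!
Both identities are the second symmetric difference of `sin` and `cos` at `x = ω(t + μ)` with step
`h = ωμ`: for `f = sin` or `f = cos`, `f (x + h) - 2 f x + f (x - h) = -4 sin² (h / 2) f x`.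
Since `y · sinc y = sin y` for every `y`, the factor `ω² sinc² (ωμ / 2)` equals
`4 sin² (ωμ / 2) / μ²`, so the two terms cancel.
-/

namespace Real

lemma cos_sub_one_eq (h : ℝ) : cos h - 1 = -2 * sin (h / 2) ^ 2 := by
  have h_double := cos_two_mul_eq_one_sub (h / 2)
  rw [mul_div_cancel₀ _ two_ne_zero] at h_double
  linarith

lemma sin_add_sub_two_mul_sin_add_sin_sub (x h : ℝ) :
    sin (x + h) - 2 * sin x + sin (x - h) = -4 * sin (h / 2) ^ 2 * sin x := by
  rw [sin_add, sin_sub]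
  linear_combination 2 * sin x * cos_sub_one_eq h

lemma cos_add_sub_two_mul_cos_add_cos_sub (x h : ℝ) :
    cos (x + h) - 2 * cos x + cos (x - h) = -4 * sin (h / 2) ^ 2 * cos x := by
  rw [cos_add, cos_sub]
  linear_combination 2 * cos x * cos_sub_one_eq h

end Real

lemma mul_sinc (x : ℝ) : x * sinc x = Real.sin x := by
  rcases eq_or_ne x 0 with rfl | hx
  · simp
  · rw [sinc, if_neg hx, mul_div_cancel₀ _ hx]

lemma sq_mul_sinc_sq_half_mul {μ : ℝ} (hμ : μ ≠ 0) (ω : ℝ) :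
    ω ^ 2 * sinc (ω * μ / 2) ^ 2 = 4 * Real.sin (ω * μ / 2) ^ 2 / μ ^ 2 := by
  rw [← mul_sinc]
  field_simp
  ring

theorem stmt16 (ω μ t : ℝ) (hμ : μ ≠ 0) :
    (Real.sin (ω * (t + 2 * μ)) - 2 * Real.sin (ω * (t + μ)) + Real.sin (ω * t)) / μ ^ 2
      + ω ^ 2 * (sinc (ω * μ / 2)) ^ 2 * Real.sin (ω * (t + μ)) = 0 ∧
    (Real.cos (ω * (t + 2 * μ)) - 2 * Real.cos (ω * (t + μ)) + Real.cos (ω * t)) / μ ^ 2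
      + ω ^ 2 * (sinc (ω * μ / 2)) ^ 2 * Real.cos (ω * (t + μ)) = 0 := by
  have h_fwd : ω * (t + 2 * μ) = ω * (t + μ) + ω * μ := by ring
  have h_bwd : ω * t = ω * (t + μ) - ω * μ := by ring
  rw [h_fwd, h_bwd, sq_mul_sinc_sq_half_mul hμ, Real.sin_add_sub_two_mul_sin_add_sin_sub,
    Real.cos_add_sub_two_mul_cos_add_cos_sub]
  constructor <;> ring
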